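/- arXiv:1501.00138 — 7 statements merged into one kernel-verified Lean document; each statement's English description precedes it below -/
import Mathlib

section
/- Let n ≥ 1 be a natural number and let a, b be real numbers with a ≠ b. Then the (n−1)-st iterated derivative of the function x ↦ (e^x/(x−b))^n, evaluated at x = a, equals (1/n)·(n·e^a/(a−b))^n · Σ_{k=0}^{n−1} ((n−1+k)!/((n−1−k)!·k!)) · (−1/(n(a−b)))^k. (This identifies the n-th Lagrange inversion coefficient for the equation (x−a)(x−b) = l·e^x with (1/(n·n!))·(n·l·e^a/(a−b))^n · B_{n−1}(−2/(n(a−b))), where B_m denotes the Bessel polynomial.) -/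
open Real Finset

/-!
Writing `(eˣ / (x - b))ⁿ = (x - b)⁻ⁿ · eⁿˣ`, the Leibniz rule expresses the derivative as a sum
over `k` of `C(n-1, k)` times the `k`-th derivative of `(x - b)⁻ⁿ`, which is
`(-1)ᵏ · n(n+1)⋯(n+k-1) · (x - b)⁻ⁿ⁻ᵏ`, times `nⁿ⁻¹⁻ᵏ eⁿᵃ`. The Bessel coefficient appears as
`C(n-1, k) · n(n+1)⋯(n+k-1) = (n-1+k)! / ((n-1-k)! k!)`.
-/

theorem iteratedDeriv_sub_const_zpow {𝕜 : Type*} [NontriviallyNormedField 𝕜] (m : ℤ) (k : ℕ)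
    (b x : 𝕜) :
    iteratedDeriv k (fun y => (y - b) ^ m) x =
      (∏ i ∈ range k, ((m : 𝕜) - i)) * (x - b) ^ (m - k) := by
  rw [congrFun (iteratedDeriv_comp_sub_const k (· ^ m) b) x, iteratedDeriv_eq_iterate,
    iter_deriv_zpow]

theorem prod_range_neg_natCast_sub {R : Type*} [CommRing R] (n k : ℕ) :
    ∏ i ∈ range k, (-(n : R) - i) = (-1) ^ k * n.ascFactorial k := by
  have h (i : ℕ) : -(n : R) - i = -1 * ((n + i : ℕ) : R) := by push_cast; ring
  simp only [h, prod_mul_distrib, prod_const, card_range, Nat.ascFactorial_eq_prod_range,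
    Nat.cast_prod]

theorem iteratedDeriv_sub_const_zpow_neg {𝕜 : Type*} [NontriviallyNormedField 𝕜] (n k : ℕ)
    (b x : 𝕜) :
    iteratedDeriv k (fun y => (y - b) ^ (-(n : ℤ))) x =
      (-1) ^ k * n.ascFactorial k * (x - b) ^ (-((n + k : ℕ) : ℤ)) := by
  rw [iteratedDeriv_sub_const_zpow]
  push_cast
  rw [prod_range_neg_natCast_sub, neg_sub_left, add_comm]

theorem iteratedDeriv_sub_const_zpow_neg_mul_exp (n m : ℕ) (c : ℝ) {a b : ℝ} (hab : a ≠ b) :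
    iteratedDeriv m (fun x => (x - b) ^ (-(n : ℤ)) * exp (c * x)) a =
      ∑ k ∈ range (m + 1), (m.choose k : ℝ) *
        ((-1) ^ k * n.ascFactorial k * (a - b) ^ (-((n + k : ℕ) : ℤ))) *
          (c ^ (m - k) * exp (c * a)) := by
  have hzpow : ContDiffAt ℝ m (fun x => (x - b) ^ (-(n : ℤ))) a := by
    simp only [zpow_neg, zpow_natCast]
    exact ((contDiffAt_id.sub contDiffAt_const).pow n).fun_inv
      (pow_ne_zero n (sub_ne_zero.mpr hab))
  have hexp : ContDiffAt ℝ m (fun x => exp (c * x)) a := by fun_prop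
  rw [iteratedDeriv_fun_mul hzpow hexp]
  simp only [iteratedDeriv_sub_const_zpow_neg, iteratedDeriv_exp_const_mul]

theorem exp_div_sub_pow_eq_zpow_mul_exp (n : ℕ) (b : ℝ) :
    (fun x => (exp x / (x - b)) ^ n) = fun x => (x - b) ^ (-(n : ℤ)) * exp (n * x) := by
  ext x
  rw [div_pow, ← exp_nat_mul, zpow_neg, zpow_natCast, div_eq_inv_mul]

theorem choose_mul_ascFactorial_eq {K : Type*} [Field K] [CharZero K] {p k : ℕ} (hk : k ≤ p) :
    (p.choose k : K) * (p + 1).ascFactorial k =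
      (p + k).factorial / ((p - k).factorial * k.factorial) := by
  rw [Nat.cast_choose K hk, ← Nat.factorial_mul_ascFactorial]
  push_cast
  field_simp

/-- The (n−1)-st iterated derivative of `x ↦ (e^x/(x−b))^n` at `x = a` equals
`(1/n)·(n·e^a/(a−b))^n · Σ_{k=0}^{n−1} ((n−1+k)!/((n−1−k)!·k!)) · (−1/(n(a−b)))^k`,
i.e. the n-th Lagrange inversion coefficient for `(x−a)(x−b) = l·e^x` is expressed via
the Bessel polynomial `B_{n−1}(−2/(n(a−b)))`. -/
theorem lagrange_coeff_bessel (n : ℕ) (hn : 1 ≤ n) (a b : ℝ) (hab : a ≠ b) :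
    iteratedDeriv (n - 1) (fun x : ℝ => (Real.exp x / (x - b)) ^ n) a =
      (1 / (n : ℝ)) * ((n : ℝ) * Real.exp a / (a - b)) ^ n *
        ∑ k ∈ Finset.range n,
          (((n - 1 + k).factorial : ℝ) / (((n - 1 - k).factorial : ℝ) * (k.factorial : ℝ))) *
            (-1 / ((n : ℝ) * (a - b))) ^ k := by
  obtain ⟨p, rfl⟩ : ∃ p, n = p + 1 := ⟨n - 1, by omega⟩
  rw [exp_div_sub_pow_eq_zpow_mul_exp, Nat.add_sub_cancel,
    iteratedDeriv_sub_const_zpow_neg_mul_exp _ _ _ hab, mul_sum]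
  refine sum_congr rfl fun k hk => ?_
  obtain ⟨q, rfl⟩ := Nat.exists_eq_add_of_le (Nat.lt_succ_iff.mp (mem_range.mp hk))
  have hN : ((k + q + 1 : ℕ) : ℝ) ≠ 0 := by positivity
  have hA : a - b ≠ 0 := sub_ne_zero.mpr hab
  rw [← choose_mul_ascFactorial_eq (Nat.le_add_right k q), zpow_neg, zpow_natCast,
    Nat.add_sub_cancel_left, exp_nat_mul, div_pow, div_pow, mul_pow, mul_pow]
  field_simp
  ring
end

section
/- Let n ≥ 0 be a natural number and x a nonzero real number. Then e^{−x} · x^{n+1} · [the n-th iterated derivative of y ↦ e^y/y^{n+1}, evaluated at y = x] equals Σ_{k=0}^{n} ((n+k)!/((n−k)!·k!)) · (−1/x)^k, i.e. it equals the Bessel polynomial B_n evaluated at −2/x. (Novel Rodrigues-type representation of the Bessel polynomials.) -/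
/-!
By the Leibniz rule applied to `y ^ (-(n + 1)) * exp y`, the factor `exp x` survives every term
and cancels `exp (-x)`. The `k`-th derivative of `y ^ (-(n + 1))` is
`(-1) ^ k * (n + 1) ⋯ (n + k) * y ^ (-(n + 1) - k)`, so after multiplying by `x ^ (n + 1)` the
`k`-th term is `n.choose k * (n + k)! / n! * (-1 / x) ^ k = (n + k)! / ((n - k)! * k!) * (-1 / x) ^ k`.
-/

open Real Finset Nat

theorem iteratedDeriv_zpow_mul_exp (m : ℤ) (n : ℕ) {x : ℝ} (hx : x ≠ 0) :
    iteratedDeriv n (fun y : ℝ => y ^ m * exp y) x =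
      (∑ i ∈ range (n + 1), n.choose i * (∏ j ∈ range i, ((m : ℝ) - j)) * x ^ (m - i)) *
        exp x := by
  have hzpow : ContDiffAt ℝ n (fun y : ℝ => y ^ m) x := (analyticAt_id.zpow hx).contDiffAt
  rw [iteratedDeriv_fun_mul hzpow contDiff_exp.contDiffAt, sum_mul]
  refine sum_congr rfl fun i _ => ?_
  rw [iteratedDeriv_eq_iterate, iteratedDeriv_eq_iterate, iter_deriv_zpow, iter_deriv_exp]
  ring

theorem prod_range_neg_sub_natCast (m k : ℕ) :
    ∏ j ∈ range k, (-(m : ℝ) - j) = (-1) ^ k * m.ascFactorial k := by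
  calc ∏ j ∈ range k, (-(m : ℝ) - j) = ∏ j ∈ range k, (-1 * ((m : ℝ) + j)) :=
        prod_congr rfl fun j _ => by ring
    _ = (-1) ^ k * m.ascFactorial k := by
        rw [prod_mul_distrib, prod_const, card_range, ascFactorial_eq_prod_range]
        push_cast
        rfl

theorem choose_mul_ascFactorial_succ {n k : ℕ} (hk : k ≤ n) :
    (n.choose k * (n + 1).ascFactorial k : ℝ) = (n + k)! / ((n - k)! * k !) := by
  rw [cast_choose ℝ hk, ← factorial_mul_ascFactorial n k]
  push_cast
  field_simp

/-- Novel Rodrigues-type representation of the Bessel polynomials: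
`e^{−x}·x^{n+1}·(d/dy)^n [e^y/y^{n+1}]|_{y=x} = Σ_{k=0}^{n} ((n+k)!/((n−k)!·k!))·(−1/x)^k
= B_n(−2/x)`. -/
theorem bessel_novel_representation (n : ℕ) (x : ℝ) (hx : x ≠ 0) :
    Real.exp (-x) * x ^ (n + 1) *
        iteratedDeriv n (fun y : ℝ => Real.exp y / y ^ (n + 1)) x =
      ∑ k ∈ Finset.range (n + 1),
        (((n + k).factorial : ℝ) / (((n - k).factorial : ℝ) * (k.factorial : ℝ))) *
          (-1 / x) ^ k := by
  have hf : (fun y : ℝ => exp y / y ^ (n + 1)) = fun y => y ^ (-((n + 1 : ℕ) : ℤ)) * exp y := by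
    funext y
    rw [zpow_neg, zpow_natCast, div_eq_inv_mul]
  have hexp (S : ℝ) : exp (-x) * x ^ (n + 1) * (S * exp x) = x ^ (n + 1) * S := by
    rw [exp_neg]
    field_simp
  rw [hf, iteratedDeriv_zpow_mul_exp _ n hx, hexp, mul_sum]
  refine sum_congr rfl fun k hk => ?_
  have hpow : x ^ (n + 1) * x ^ (-((n + 1 : ℕ) : ℤ) - k) = x⁻¹ ^ k := by
    rw [← zpow_natCast x (n + 1), ← zpow_add₀ hx,
      show ((n + 1 : ℕ) : ℤ) + (-((n + 1 : ℕ) : ℤ) - k) = -k by ring, zpow_neg, zpow_natCast,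
      inv_pow]
  have hcoeff : (n.choose k : ℝ) * ∏ j ∈ range k, (((-((n + 1 : ℕ) : ℤ) : ℤ) : ℝ) - j) =
      (-1) ^ k * ((n + k)! / ((n - k)! * k !)) := by
    rw [Int.cast_neg, Int.cast_natCast, prod_range_neg_sub_natCast, mul_left_comm,
      choose_mul_ascFactorial_succ (Nat.lt_succ_iff.mp (mem_range.mp hk))]
  rw [div_eq_mul_inv (-1 : ℝ), mul_pow, ← hpow, hcoeff]
  ring
end

section
/- Let T denote the operator sending a function g : ℝ → ℝ to the function y ↦ y²·g′(y). Let n ≥ 0 be a natural number and x a nonzero real number. Then e^{−x} · [the n-th iterate of T applied to the function y ↦ e^y·(y^{2n})⁻¹, evaluated at y = x] equals Σ_{k=0}^{n} ((n+k)!/((n−k)!·k!)) · (−1/x)^k, i.e. it equals the Bessel polynomial B_n evaluated at −2/x. -/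
/-!
Writing `T g = y² g'`, one has `T (eʸ yᵇ) = eʸ (y^(b+2) + b y^(b+1))`, so
`Tᵐ (eʸ yᵃ) = eʸ ∑ₖ c(m,k) y^(a+2m-k)` where the coefficients satisfy the Pascal-type
recurrence `c(m+1,k+1) = c(m,k+1) + (a+2m-k) c(m,k)`, solved by
`c(m,k) = C(m,k) (a+m-1)(a+m-2)⋯(a+m-k)`.
For `a = -2n` and `m = n` the falling factorial is `(-1)ᵏ (n+k)!/n!`, which turns `c(n,k) y^(-k)`
into the `k`-th term of `Bₙ(-2/y)`.
-/

open Real Finset Filter Topology Polynomial Nat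

noncomputable def sqMulDeriv (g : ℝ → ℝ) (y : ℝ) : ℝ := y ^ 2 * deriv g y

noncomputable def sqMulDerivCoeff (a : ℤ) (m k : ℕ) : ℤ :=
  m.choose k * (descPochhammer ℤ k).eval (a + m - 1)

namespace sqMulDerivCoeff

@[simp] theorem zero_right (a : ℤ) (m : ℕ) : sqMulDerivCoeff a m 0 = 1 := by
  simp [sqMulDerivCoeff]

theorem succ_self (a : ℤ) (m : ℕ) : sqMulDerivCoeff a m (m + 1) = 0 := by
  simp [sqMulDerivCoeff, Nat.choose_succ_self]

theorem succ_succ (a : ℤ) (m k : ℕ) :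
    sqMulDerivCoeff a (m + 1) (k + 1) =
      sqMulDerivCoeff a m (k + 1) + sqMulDerivCoeff a m k * (a + 2 * m - k) := by
  have hchoose : ((m.choose (k + 1) : ℕ) : ℤ) * (k + 1) = m.choose k * (m - k) := by
    rcases le_or_gt k m with h | h
    · have := Nat.choose_succ_right_eq m k
      zify [h] at this
      exact this
    · simp [Nat.choose_eq_zero_of_lt h, Nat.choose_eq_zero_of_lt (h.trans (Nat.lt_succ_self k))]
  have hleft : (descPochhammer ℤ (k + 1)).eval (a + m) =
      (a + m) * (descPochhammer ℤ k).eval (a + m - 1) := by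
    simp [descPochhammer_succ_left]
  have hright := descPochhammer_succ_eval k (a + m - 1)
  unfold sqMulDerivCoeff
  rw [show a + ((m + 1 : ℕ) : ℤ) - 1 = a + m by push_cast; ring, hleft, hright,
    Nat.choose_succ_succ, Nat.cast_add]
  linear_combination (eval (a + m - 1) (descPochhammer ℤ k)) * hchoose

end sqMulDerivCoeff

theorem sum_sqMulDerivCoeff_succ (a : ℤ) (m : ℕ) (f : ℕ → ℝ) :
    ∑ k ∈ range (m + 2), (sqMulDerivCoeff a (m + 1) k : ℝ) * f k =
      ∑ k ∈ range (m + 1),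
        (sqMulDerivCoeff a m k : ℝ) * (f k + ((a + 2 * m - k : ℤ) : ℝ) * f (k + 1)) := by
  have hshift : ∑ k ∈ range (m + 1), (sqMulDerivCoeff a m k : ℝ) * f k =
      f 0 + ∑ k ∈ range (m + 1), (sqMulDerivCoeff a m (k + 1) : ℝ) * f (k + 1) := by
    rw [sum_range_succ' _ m, sum_range_succ _ m, sqMulDerivCoeff.succ_self]
    simp [add_comm]
  rw [sum_range_succ']
  simp only [sqMulDerivCoeff.succ_succ, sqMulDerivCoeff.zero_right, Int.cast_add, Int.cast_mul,
    Int.cast_one, one_mul, add_mul, mul_add, mul_assoc, sum_add_distrib, hshift]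
  ring

theorem hasDerivAt_exp_mul_sum_zpow (e : ℤ) (N : ℕ) (b : ℕ → ℝ) {y : ℝ} (hy : y ≠ 0) :
    HasDerivAt (fun z => exp z * ∑ k ∈ range N, b k * z ^ (e - k))
      (exp y * ∑ k ∈ range N,
        b k * (y ^ (e - k) + ((e - k : ℤ) : ℝ) * y ^ (e - k - 1))) y := by
  have hsum : HasDerivAt (fun z => ∑ k ∈ range N, b k * z ^ (e - k))
      (∑ k ∈ range N, b k * ((e - k : ℤ) * y ^ (e - k - 1))) y :=
    HasDerivAt.fun_sum fun k _ => (hasDerivAt_zpow _ y (Or.inl hy)).const_mul _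
  refine ((hasDerivAt_exp y).fun_mul hsum).congr_deriv ?_
  simp only [mul_add, sum_add_distrib]

noncomputable def expZpowSum (a : ℤ) (m : ℕ) (y : ℝ) : ℝ :=
  exp y * ∑ k ∈ range (m + 1), (sqMulDerivCoeff a m k : ℝ) * y ^ (a + 2 * m - k)

theorem sqMulDeriv_expZpowSum (a : ℤ) (m : ℕ) {y : ℝ} (hy : y ≠ 0) :
    sqMulDeriv (expZpowSum a m) y = expZpowSum a (m + 1) y := by
  have hpow : ∀ j : ℤ, y ^ 2 * y ^ j = y ^ (j + 2) := fun j => by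
    rw [zpow_add₀ hy, mul_comm]; norm_cast
  unfold sqMulDeriv expZpowSum
  rw [(hasDerivAt_exp_mul_sum_zpow _ _ (sqMulDerivCoeff a m · : ℕ → ℝ) hy).deriv,
    sum_sqMulDerivCoeff_succ, mul_left_comm, mul_sum]
  refine congrArg _ (sum_congr rfl fun k _ => ?_)
  rw [mul_left_comm, mul_add, mul_left_comm _ ((_ : ℤ) : ℝ), hpow, hpow,
    show a + 2 * ((m + 1 : ℕ) : ℤ) - k = a + 2 * m - k + 2 by push_cast; ring,
      show a + 2 * ((m + 1 : ℕ) : ℤ) - (k + 1 : ℕ) = a + 2 * m - k - 1 + 2 by push_cast; ring]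

theorem iterate_sqMulDeriv_exp_mul_zpow (a : ℤ) (m : ℕ) {y : ℝ} (hy : y ≠ 0) :
    sqMulDeriv^[m] (fun z => exp z * z ^ a) y = expZpowSum a m y := by
  induction m generalizing y with
  | zero => simp [expZpowSum]
  | succ m ih =>
    have hev : sqMulDeriv^[m] (fun z => exp z * z ^ a) =ᶠ[𝓝 y] expZpowSum a m :=
      eventually_of_mem (isOpen_ne.mem_nhds hy) fun z hz => ih hz
    rw [Function.iterate_succ_apply', ← sqMulDeriv_expZpowSum a m hy, sqMulDeriv, sqMulDeriv,
      hev.deriv_eq]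

theorem sqMulDerivCoeff_neg_two_mul_self (n k : ℕ) (hk : k ≤ n) :
    sqMulDerivCoeff (-(2 * n)) n k * ((n - k)! * k !) = (-1) ^ k * (n + k)! := by
  have hasc := ascPochhammer_eval_neg_eq_descPochhammer ℤ (-((n + 1 : ℕ) : ℤ)) k
  rw [neg_neg, ← ascPochhammer_eval_cast, ascPochhammer_nat_eq_ascFactorial] at hasc
  have hfac : ((n ! * (n + 1).ascFactorial k : ℕ) : ℤ) = (n + k)! := by
    exact_mod_cast Nat.factorial_mul_ascFactorial n k
  have hchoose : ((n.choose k * k ! * (n - k)! : ℕ) : ℤ) = n ! := by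
    exact_mod_cast Nat.choose_mul_factorial_mul_factorial hk
  have hsign : ((-1 : ℤ) ^ k) * (-1) ^ k = 1 := by rw [← mul_pow]; simp
  rw [sqMulDerivCoeff, show -(2 * (n : ℤ)) + n - 1 = -((n + 1 : ℕ) : ℤ) by push_cast; ring]
  push_cast at hfac hchoose hasc ⊢
  set D := (descPochhammer ℤ k).eval (-((n : ℤ) + 1))
  linear_combination D * hchoose + (-1) ^ k * hfac - (-1) ^ k * (n ! : ℤ) * hasc
    - (n ! : ℤ) * D * hsign

/-- Let `T` send `g` to `y ↦ y²·g′(y)`. Then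
`e^{−x}·(Tⁿ (y ↦ e^y·(y^{2n})⁻¹)) x = Σ_{k=0}^{n} ((n+k)!/((n−k)!·k!))·(−1/x)^k = B_n(−2/x)`. -/
theorem bessel_via_x_sq_D (n : ℕ) (x : ℝ) (hx : x ≠ 0) :
    Real.exp (-x) *
        ((fun g : ℝ → ℝ => fun y : ℝ => y ^ 2 * deriv g y)^[n]
          (fun y : ℝ => Real.exp y * (y ^ (2 * n))⁻¹)) x =
      ∑ k ∈ Finset.range (n + 1),
        (((n + k).factorial : ℝ) / (((n - k).factorial : ℝ) * (k.factorial : ℝ))) *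
          (-1 / x) ^ k := by
  have hstart :
      (fun y : ℝ => exp y * (y ^ (2 * n))⁻¹) = fun y => exp y * y ^ (-(2 * n : ℤ)) := by
    ext y; rw [zpow_neg]; norm_cast
  change exp (-x) * sqMulDeriv^[n] _ x = _
  rw [hstart, iterate_sqMulDeriv_exp_mul_zpow _ _ hx, expZpowSum, ← mul_assoc, ← exp_add,
    neg_add_cancel, exp_zero, one_mul]
  refine sum_congr rfl fun k hk => ?_
  have hcoeff :
      (sqMulDerivCoeff (-(2 * n)) n k : ℝ) * ((n - k)! * k !) = (-1) ^ k * (n + k)! := by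
    exact_mod_cast sqMulDerivCoeff_neg_two_mul_self n k (Nat.lt_succ_iff.mp (mem_range.mp hk))
  rw [show -(2 * n : ℤ) + 2 * n - k = -k by ring, zpow_neg, zpow_natCast,
    eq_div_iff (by positivity) |>.mpr hcoeff]
  ring
end

section
/- Let T denote the operator sending a function g : ℝ → ℝ to the function y ↦ y²·g′(y), and let f : ℝ → ℝ be infinitely differentiable (C^∞ on all of ℝ). Then for every natural number n ≥ 1 and every real x, the n-th iterate of T applied to f, evaluated at x, equals x^{n+1} times the n-th iterated derivative of the function y ↦ y^{n−1}·f(y), evaluated at y = x. (Operator identity (x²D)^n = x^{n+1} D^n x^{n−1}.) -/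
open Real

private lemma iterDeriv_add (f g : ℝ → ℝ) (hf : ContDiff ℝ (⊤ : ℕ∞) f) (hg : ContDiff ℝ (⊤ : ℕ∞) g)
    (n : ℕ) (x : ℝ) :
    iteratedDeriv n (fun y => f y + g y) x = iteratedDeriv n f x + iteratedDeriv n g x := by
  have := iteratedDerivWithin_add (Set.mem_univ x) uniqueDiffOn_univ
    ((hf.of_le (by exact_mod_cast le_top) : ContDiff ℝ n f).contDiffWithinAt (s := Set.univ)) ((hg.of_le (by exact_mod_cast le_top) : ContDiff ℝ n g).contDiffWithinAt (s := Set.univ))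
    (n := n)
  simpa [iteratedDerivWithin_univ, Pi.add_def] using this

private lemma leibniz_id (n : ℕ) : ∀ (h : ℝ → ℝ), ContDiff ℝ (⊤ : ℕ∞) h → ∀ x : ℝ,
    iteratedDeriv (n + 1) (fun y => y * h y) x
      = (n + 1 : ℝ) * iteratedDeriv n h x + x * iteratedDeriv (n + 1) h x := by
  induction n with
  | zero =>
    intro h hh x
    have hd : deriv (fun y => y * h y) x = h x + x * deriv h x := by
      rw [deriv_fun_mul (c := fun y => y) differentiableAt_id (((contDiff_infty_iff_deriv.mp hh).1) x)]
      simp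
    simp [iteratedDeriv_one, iteratedDeriv_zero, hd]
  | succ n ih =>
    intro h hh x
    have hh' : ContDiff ℝ (⊤ : ℕ∞) (deriv h) := (contDiff_infty_iff_deriv.mp hh).2
    have hd : deriv (fun y => y * h y) = fun y => h y + y * deriv h y := by
      funext y
      rw [deriv_fun_mul (c := fun y => y) differentiableAt_id (((contDiff_infty_iff_deriv.mp hh).1) y)]
      simp
    have hmul : ContDiff ℝ (⊤ : ℕ∞) (fun y : ℝ => y * deriv h y) :=
      contDiff_id.mul hh'
    rw [iteratedDeriv_succ', hd,
      iterDeriv_add h (fun y => y * deriv h y) hh hmul (n + 1) x,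
      ih (deriv h) hh' x, ← iteratedDeriv_succ', ← iteratedDeriv_succ']
    push_cast
    ring

/-- Operator identity `(x²D)^n = x^{n+1} D^n x^{n−1}`: for `f` infinitely differentiable and
`n ≥ 1`, `(Tⁿ f) x = x^{n+1} · (d/dy)^n [y^{n−1}·f(y)]|_{y=x}` where `T g = y ↦ y²·g′(y)`. -/
theorem x_sq_D_pow_eq (f : ℝ → ℝ) (hf : ContDiff ℝ (⊤ : ℕ∞) f) (n : ℕ) (hn : 1 ≤ n) (x : ℝ) :
    ((fun g : ℝ → ℝ => fun y : ℝ => y ^ 2 * deriv g y)^[n] f) x =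
      x ^ (n + 1) * iteratedDeriv n (fun y : ℝ => y ^ (n - 1) * f y) x := by
  induction n, hn using Nat.le_induction generalizing x with
  | base =>
    simp only [Function.iterate_one]
    have : (fun y : ℝ => y ^ (1 - 1) * f y) = f := by funext y; simp
    rw [this, iteratedDeriv_one]
  | succ n hn ih =>
    set g : ℝ → ℝ := fun y => y ^ (n - 1) * f y with hg
    have hgsm : ContDiff ℝ (⊤ : ℕ∞) g := (contDiff_id.pow _).mul (hf.of_le (by simp))
    have hTn : (fun g : ℝ → ℝ => fun y : ℝ => y ^ 2 * deriv g y)^[n] f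
        = fun y => y ^ (n + 1) * iteratedDeriv n g y := funext fun y => ih y
    rw [Function.iterate_succ_apply', hTn]
    have hdiff : DifferentiableAt ℝ (iteratedDeriv n g) x :=
      (hgsm.differentiable_iteratedDeriv n (by exact_mod_cast lt_top_iff_ne_top.mpr (ENat.coe_ne_top n))).differentiableAt
    have hd : deriv (fun y => y ^ (n + 1) * iteratedDeriv n g y) x
        = (n + 1 : ℝ) * x ^ n * iteratedDeriv n g x + x ^ (n + 1) * iteratedDeriv (n + 1) g x := by
      rw [deriv_fun_mul (differentiableAt_pow _) hdiff, deriv_pow_field, iteratedDeriv_succ]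
      push_cast
      ring
    have hyg : (fun y : ℝ => y ^ (n + 1 - 1) * f y) = fun y => y * g y := by
      funext y
      simp only [Nat.add_sub_cancel, hg]
      have hpow : y * y ^ (n - 1) = y ^ n := by
        rw [← pow_succ', Nat.sub_add_cancel hn]
      rw [← hpow]
      ring
    rw [hyg, leibniz_id n g hgsm x, hd]
    ring
end

section
/- Let T denote the operator sending a function g : ℝ → ℝ to the function y ↦ y²·g′(y), let f : ℝ → ℝ be infinitely differentiable (C^∞ on all of ℝ), let n ≥ 0 be a natural number, and let x be a nonzero real number. Then the n-th iterate of T applied to f, evaluated at x, equals (−1)^n times the n-th iterated derivative of the function u ↦ f(1/u), evaluated at u = 1/x. (The operator (x²D)^n coincides with (−d/d(1/x))^n.) -/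
open Real

/-- The operator `(x²D)^n` coincides with `(−d/d(1/x))^n`: for `f` infinitely differentiable
and `x ≠ 0`, `(Tⁿ f) x = (−1)^n · (d/du)^n [f(1/u)]|_{u=1/x}` where `T g = y ↦ y²·g′(y)`. -/
theorem x_sq_D_pow_eq_reciprocal_deriv (f : ℝ → ℝ) (hf : ContDiff ℝ (⊤ : ℕ∞) f) (n : ℕ) (x : ℝ)
    (hx : x ≠ 0) :
    ((fun g : ℝ → ℝ => fun y : ℝ => y ^ 2 * deriv g y)^[n] f) x =
      (-1 : ℝ) ^ n * iteratedDeriv n (fun u : ℝ => f (1 / u)) (1 / x) := by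
  induction n generalizing f with
  | zero => simp [one_div, inv_inv]
  | succ n ih =>
    set T : (ℝ → ℝ) → (ℝ → ℝ) := fun g => fun y : ℝ => y ^ 2 * deriv g y with hT
    have hTf : ContDiff ℝ (⊤ : ℕ∞) (T f) := by
      have hf' : ContDiff ℝ (((⊤ : ℕ∞) : WithTop ℕ∞) + 1) f := by
        rwa [show (((⊤ : ℕ∞) : WithTop ℕ∞) + 1) = ((⊤ : ℕ∞) : WithTop ℕ∞) from rfl]
      exact (contDiff_id.pow 2).mul (contDiff_succ_iff_deriv.mp hf').2.2
    have key : iteratedDeriv n (deriv (fun u : ℝ => f (1 / u))) (1 / x) =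
        iteratedDeriv n (fun u : ℝ => -((T f) (1 / u))) (1 / x) := by
      apply Filter.EventuallyEq.iteratedDeriv_eq
      have hmem : {u : ℝ | u ≠ 0} ∈ nhds (1 / x) := by
        exact isOpen_ne.mem_nhds (by simp [hx])
      filter_upwards [hmem] with u hu
      have hu' : (u : ℝ) ≠ 0 := hu
      have h1 : HasDerivAt (fun u : ℝ => f u⁻¹)
          (deriv f u⁻¹ * (-(u ^ 2)⁻¹)) u :=
        (hf.differentiable (by simp) _).hasDerivAt.comp u (hasDerivAt_inv hu')
      simp only [one_div]
      rw [h1.deriv]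
      have : (1 / u) ^ 2 = (u ^ 2)⁻¹ := by field_simp
      simp [hT, this]
      ring
    calc ((fun g : ℝ → ℝ => fun y : ℝ => y ^ 2 * deriv g y)^[n+1] f) x
        = ((fun g : ℝ → ℝ => fun y : ℝ => y ^ 2 * deriv g y)^[n] (T f)) x := by
          rw [Function.iterate_succ_apply]
      _ = (-1 : ℝ) ^ n * iteratedDeriv n (fun u : ℝ => (T f) (1 / u)) (1 / x) := ih _ hTf
      _ = (-1 : ℝ) ^ (n+1) * iteratedDeriv (n+1) (fun u : ℝ => f (1 / u)) (1 / x) := by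
          rw [iteratedDeriv_succ', key]
          have := iteratedDeriv_neg n (fun u : ℝ => (T f) (1 / u)) (1 / x)
          simp only [Pi.neg_def] at this ⊢
          rw [this]
          ring
end

section
/- Let n ≥ 1 be a natural number and let s, t be real numbers. Then the (n−1)-st iterated derivative of the function x ↦ e^{n x}·(x−t)^n, evaluated at x = s, equals e^{n s} · Σ_{j=0}^{n−1} binom(n−1,j) · n^{j} · (n!/(j+1)!) · (s−t)^{j+1}. (This is the Lagrange coefficient computation for the equation (x−s)/(x−t) = l·e^x, whose series solution is expressed via generalized Laguerre polynomials L^{(1)}_{n−1}.) -/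
/-!
By Leibniz's rule, the `j`-th term of the sum comes from differentiating `e^{nx}` `j` times
(giving `n^j e^{nx}`) and `(x - t)^n` the remaining `n - 1 - j` times
(giving `n!/(j+1)! (x - t)^{j+1}`).
-/

open Real Finset

lemma iteratedDeriv_sub_const_pow {𝕜 : Type*} [NontriviallyNormedField 𝕜] (N k : ℕ) (t x : 𝕜) :
    iteratedDeriv k (fun y => (y - t) ^ N) x = N.descFactorial k * (x - t) ^ (N - k) := by
  simp [iteratedDeriv_comp_sub_const k (· ^ N) t]

lemma iteratedDeriv_exp_const_mul_mul_sub_const_pow (a t : ℝ) (m N : ℕ) (x : ℝ) :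
    iteratedDeriv m (fun y => exp (a * y) * (y - t) ^ N) x =
      exp (a * x) * ∑ i ∈ range (m + 1),
        (m.choose i : ℝ) * a ^ i * N.descFactorial (m - i) * (x - t) ^ (N - (m - i)) := by
  rw [iteratedDeriv_fun_mul (by fun_prop) (by fun_prop), mul_sum]
  refine sum_congr rfl fun i _ => ?_
  rw [iteratedDeriv_exp_const_mul, iteratedDeriv_sub_const_pow]
  ring

lemma Nat.cast_descFactorial_eq_div {K : Type*} [DivisionRing K] [CharZero K] {n k : ℕ}
    (h : k ≤ n) : (n.descFactorial k : K) = n.factorial / (n - k).factorial := by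
  rw [eq_div_iff (Nat.cast_ne_zero.mpr (Nat.factorial_ne_zero _)), ← Nat.cast_mul, mul_comm,
    Nat.factorial_mul_descFactorial h]

/-- Lagrange coefficient computation for `(x−s)/(x−t) = l·e^x`: the (n−1)-st iterated
derivative of `x ↦ e^{nx}·(x−t)^n` at `x = s` equals
`e^{ns} · Σ_{j=0}^{n−1} binom(n−1,j)·n^j·(n!/(j+1)!)·(s−t)^{j+1}`. -/
theorem lagrange_coeff_laguerre (n : ℕ) (hn : 1 ≤ n) (s t : ℝ) :
    iteratedDeriv (n - 1) (fun x : ℝ => Real.exp ((n : ℝ) * x) * (x - t) ^ n) s =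
      Real.exp ((n : ℝ) * s) *
        ∑ j ∈ Finset.range n,
          ((n - 1).choose j : ℝ) * (n : ℝ) ^ j *
            ((n.factorial : ℝ) / ((j + 1).factorial : ℝ)) * (s - t) ^ (j + 1) := by
  rw [iteratedDeriv_exp_const_mul_mul_sub_const_pow, Nat.sub_add_cancel hn]
  congr 1
  refine sum_congr rfl fun j hj => ?_
  have hjn : j < n := mem_range.mp hj
  rw [Nat.cast_descFactorial_eq_div (by omega), show n - (n - 1 - j) = j + 1 by omega]
end

section
/- Let n ≥ 0 be a natural number and x a nonzero real number. Then 2^{−n} · e^{2/x} · [the n-th iterated derivative of y ↦ e^{−2/y}·y^{2n}, evaluated at y = x] equals Σ_{k=0}^{n} ((n+k)!/((n−k)!·k!)) · (x/2)^k, i.e. it equals the Bessel polynomial B_n(x). (Classical Rodrigues formula for the Bessel polynomials, as in Krall–Frink.) -/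
/-!
Since `d/dy (e^{-2/y} y^j) = e^{-2/y} (2 y^{j-2} + j y^{j-1})`, the `m`-th derivative of
`e^{-2/y} y^e` is `e^{-2/y} Σ_k c(m, k) y^{e-2m+k}`, where the coefficients obey the Pascal-type
recursion `c(m+1, k+1) = 2 c(m, k+1) + (e - 2m + k) c(m, k)`. This is solved by
`c(m, k) = 2^{m-k} C(m, k) (e-m+k)(e-m+k-1)⋯(e-m+1)`, the identity
`(k+1) C(m, k+1) = (m-k) C(m, k)` being what makes the recursion close up. For `e = 2n`, `m = n`
the coefficient is `2^{n-k} (n+k)! / ((n-k)! k!)`, and the factors `2^{-n} e^{2/x}` cancel the rest.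
-/

open Finset

lemma descPochhammer_succ_eval_add_one {R : Type*} [CommRing R] (k : ℕ) (x : R) :
    (descPochhammer R (k + 1)).eval (x + 1) = (x + 1) * (descPochhammer R k).eval x := by
  simp [descPochhammer_succ_left]

-- `2 ^ m / 2 ^ k` rather than `2 ^ (m - k)`, so that no truncated subtraction enters the recursion.
noncomputable def besselDerivCoeff (e : ℤ) (m k : ℕ) : ℝ :=
  2 ^ m / 2 ^ k * m.choose k * (descPochhammer ℝ k).eval ((e : ℝ) - m + k)

lemma besselDerivCoeff_zero_right (e : ℤ) (m : ℕ) : besselDerivCoeff e m 0 = 2 ^ m := by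
  simp [besselDerivCoeff]

lemma besselDerivCoeff_succ_self (e : ℤ) (m : ℕ) : besselDerivCoeff e m (m + 1) = 0 := by
  simp [besselDerivCoeff]

lemma besselDerivCoeff_succ_succ (e : ℤ) (m k : ℕ) :
    besselDerivCoeff e (m + 1) (k + 1) =
      2 * besselDerivCoeff e m (k + 1) + (e - 2 * m + k) * besselDerivCoeff e m k := by
  have hchoose : (m.choose (k + 1) : ℝ) * (k + 1) = m.choose k * (m - k) := by
    rcases le_or_gt k m with hk | hk
    · rw [← Nat.cast_sub hk]
      exact_mod_cast Nat.choose_succ_right_eq m k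
    · simp [Nat.choose_eq_zero_of_lt hk, Nat.choose_eq_zero_of_lt (Nat.lt_succ_of_lt hk)]
  have hleft : (e : ℝ) - (m + 1 : ℕ) + (k + 1 : ℕ) = e - m + k := by push_cast; ring
  have hright : (e : ℝ) - m + (k + 1 : ℕ) = (e - m + k) + 1 := by push_cast; ring
  unfold besselDerivCoeff
  rw [hleft, hright, descPochhammer_succ_eval_add_one, descPochhammer_succ_eval,
    Nat.choose_succ_succ']
  push_cast
  linear_combination (-(2 ^ m / 2 ^ k * (descPochhammer ℝ k).eval ((e : ℝ) - m + k))) * hchoose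

lemma hasDerivAt_exp_neg_two_div_mul_zpow (j : ℤ) {x : ℝ} (hx : x ≠ 0) :
    HasDerivAt (fun y => Real.exp (-2 / y) * y ^ j)
      (Real.exp (-2 / x) * (2 * x ^ (j - 2) + j * x ^ (j - 1))) x := by
  have hinv : HasDerivAt (fun y : ℝ => -2 / y) (2 / x ^ 2) x := by
    simpa [div_eq_mul_inv, neg_mul, neg_div] using ((hasDerivAt_inv hx).const_mul (-2 : ℝ))
  refine (hinv.exp.mul (hasDerivAt_zpow j x (Or.inl hx))).congr_deriv ?_
  rw [zpow_sub₀ hx, zpow_sub₀ hx, zpow_two, zpow_one]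
  ring

lemma sum_besselDerivCoeff_mul_deriv (e : ℤ) (m : ℕ) (x : ℝ) :
    ∑ k ∈ range (m + 1), besselDerivCoeff e m k *
        (2 * x ^ (e - 2 * m + k - 2) + ((e - 2 * m + k : ℤ) : ℝ) * x ^ (e - 2 * m + k - 1)) =
      ∑ k ∈ range (m + 2), besselDerivCoeff e (m + 1) k * x ^ (e - 2 * (m + 1 : ℕ) + k) := by
  set E : ℤ := e - 2 * (m + 1 : ℕ)
  have hE : ∀ k : ℕ, e - 2 * m + k - 2 = E + k ∧ e - 2 * m + k - 1 = E + (k + 1 : ℕ) := by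
    intro k; constructor <;> push_cast [E] <;> ring
  calc _ = ∑ k ∈ range (m + 1), 2 * besselDerivCoeff e m k * x ^ (E + k) +
        ∑ k ∈ range (m + 1),
          (e - 2 * m + k) * besselDerivCoeff e m k * x ^ (E + (k + 1 : ℕ)) := by
        rw [← sum_add_distrib]
        refine sum_congr rfl fun k _ => ?_
        rw [(hE k).1, (hE k).2]
        push_cast
        ring
    _ = _ := by
      rw [sum_range_succ' _ (m + 1), sum_range_succ' (fun k => 2 * besselDerivCoeff e m k * _)]
      simp only [besselDerivCoeff_succ_succ, add_mul, sum_add_distrib]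
      rw [sum_range_succ (fun k => 2 * besselDerivCoeff e m (k + 1) * _)]
      simp only [besselDerivCoeff_succ_self, besselDerivCoeff_zero_right]
      ring

theorem iteratedDeriv_exp_neg_two_div_mul_zpow (e : ℤ) (m : ℕ) {x : ℝ} (hx : x ≠ 0) :
    iteratedDeriv m (fun y => Real.exp (-2 / y) * y ^ e) x =
      Real.exp (-2 / x) *
        ∑ k ∈ range (m + 1), besselDerivCoeff e m k * x ^ (e - 2 * m + k) := by
  induction m generalizing x with
  | zero => simp [besselDerivCoeff]
  | succ m ih =>
    have hnear : iteratedDeriv m (fun y => Real.exp (-2 / y) * y ^ e) =ᶠ[nhds x]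
        fun y => ∑ k ∈ range (m + 1),
          besselDerivCoeff e m k * (Real.exp (-2 / y) * y ^ (e - 2 * m + k)) := by
      filter_upwards [eventually_ne_nhds hx] with y hy
      rw [ih hy, mul_sum]
      exact sum_congr rfl fun k _ => by ring
    have hderiv := HasDerivAt.fun_sum fun k (_ : k ∈ range (m + 1)) =>
      (hasDerivAt_exp_neg_two_div_mul_zpow (e - 2 * m + k) hx).const_mul (besselDerivCoeff e m k)
    rw [iteratedDeriv_succ, hnear.deriv_eq, hderiv.deriv, ← sum_besselDerivCoeff_mul_deriv,
      mul_sum]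
    exact sum_congr rfl fun k _ => by ring

lemma choose_mul_descFactorial_add {K : Type*} [Field K] [CharZero K] (n k : ℕ) (hk : k ≤ n) :
    (n.choose k : K) * (n + k).descFactorial k =
      (n + k).factorial / ((n - k).factorial * k.factorial) := by
  have hdesc := Nat.factorial_mul_descFactorial (Nat.le_add_left k n)
  rw [Nat.add_sub_cancel] at hdesc
  rw [Nat.cast_choose K hk, eq_div_iff (by simp [Nat.factorial_ne_zero]), ← hdesc]
  push_cast
  field_simp [Nat.factorial_ne_zero]

lemma besselDerivCoeff_two_mul_self (n k : ℕ) (hk : k ≤ n) :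
    besselDerivCoeff (2 * n : ℕ) n k =
      2 ^ n / 2 ^ k * ((n + k).factorial / ((n - k).factorial * k.factorial)) := by
  have harg : (((2 * n : ℕ) : ℤ) : ℝ) - n + k = (n + k : ℕ) := by push_cast; ring
  rw [besselDerivCoeff, harg, descPochhammer_eval_eq_descFactorial, mul_assoc,
    choose_mul_descFactorial_add n k hk]

/-- Classical Rodrigues formula for the Bessel polynomials (Krall–Frink):
`2^{−n}·e^{2/x}·(d/dy)^n [e^{−2/y}·y^{2n}]|_{y=x} = Σ_{k=0}^{n} ((n+k)!/((n−k)!·k!))·(x/2)^k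
= B_n(x)`. -/
theorem bessel_rodrigues (n : ℕ) (x : ℝ) (hx : x ≠ 0) :
    (2 : ℝ) ^ (-(n : ℤ)) * Real.exp (2 / x) *
        iteratedDeriv n (fun y : ℝ => Real.exp (-2 / y) * y ^ (2 * n)) x =
      ∑ k ∈ Finset.range (n + 1),
        (((n + k).factorial : ℝ) / (((n - k).factorial : ℝ) * (k.factorial : ℝ))) *
          (x / 2) ^ k := by
  have hzpow : (fun y : ℝ => Real.exp (-2 / y) * y ^ (2 * n)) =
      fun y => Real.exp (-2 / y) * y ^ ((2 * n : ℕ) : ℤ) := by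
    simp only [zpow_natCast]
  have hexp : Real.exp (2 / x) * Real.exp (-2 / x) = 1 := by
    rw [← Real.exp_add, neg_div, add_neg_cancel, Real.exp_zero]
  rw [hzpow, iteratedDeriv_exp_neg_two_div_mul_zpow _ _ hx, mul_assoc,
    ← mul_assoc (Real.exp _), hexp, one_mul, zpow_neg, zpow_natCast, mul_sum]
  refine sum_congr rfl fun k hk => ?_
  have hexponent : ((2 * n : ℕ) : ℤ) - 2 * n + k = (k : ℕ) := by push_cast; ring
  rw [besselDerivCoeff_two_mul_self n k (Nat.lt_succ_iff.mp (mem_range.mp hk)), hexponent,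
    zpow_natCast, div_pow]
  field_simp
end
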